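/- Let d ≥ 2 and let S ⊆ ℤ/d²ℤ be a Sidon set with |S| = d (i.e. whenever a, b, c, e ∈ S satisfy a − b = c − e ≠ 0, then a = c and b = e). For j, k ∈ S with j ≠ k define the vector r_{j/k} ∈ ℂ^{d²} by r_{j/k}(t) = e^{2πi(j−k)t/d²} for t ∈ ℤ/d²ℤ (the coordinate-wise quotient of the rows f_j and f_k of the d²×d² Fourier matrix). Then the d(d−1) vectors r_{j/k} (j ≠ k in S) together with the all-ones vector (1,1,…,1) ∈ ℂ^{d²} are pairwise orthogonal: ⟨r_{j/k}, r_{s/q}⟩ = 0 for any two distinct ordered pairs (j,k) ≠ (s,q) with j ≠ k, s ≠ q, and ∑_{t} r_{j/k}(t) = 0 for every j ≠ k. -/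
import Mathlib

open scoped ComplexConjugate

noncomputable def zmodExp (n : ℕ) (a : ZMod n) : ℂ :=
  Complex.exp (2 * Real.pi * Complex.I * a.val / n)

lemma root_pow (n : ℕ) [NeZero n] :
    Complex.exp (2 * Real.pi * Complex.I / n) ^ n = 1 := by
  have hn : (n : ℂ) ≠ 0 := Nat.cast_ne_zero.mpr (NeZero.ne n)
  rw [← Complex.exp_nat_mul, show (n : ℂ) * (2 * Real.pi * Complex.I / n)
      = 2 * Real.pi * Complex.I by field_simp]
  exact Complex.exp_two_pi_mul_I

lemma zmodExp_eq_pow (n : ℕ) [NeZero n] (a : ZMod n) :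
    zmodExp n a = Complex.exp (2 * Real.pi * Complex.I / n) ^ a.val := by
  rw [zmodExp, ← Complex.exp_nat_mul]
  congr 1
  ring

lemma zmodExp_add (n : ℕ) [NeZero n] (a b : ZMod n) :
    zmodExp n (a + b) = zmodExp n a * zmodExp n b := by
  rw [zmodExp_eq_pow, zmodExp_eq_pow, zmodExp_eq_pow, ← pow_add, ZMod.val_add,
    ← pow_eq_pow_mod _ (root_pow n)]

lemma zmodExp_zero (n : ℕ) [NeZero n] : zmodExp n 0 = 1 := by
  simp [zmodExp]

lemma conj_zmodExp (n : ℕ) [NeZero n] (a : ZMod n) :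
    conj (zmodExp n a) = zmodExp n (-a) := by
  have h1 : zmodExp n a * zmodExp n (-a) = 1 := by
    rw [← zmodExp_add, add_neg_cancel, zmodExp_zero]
  have h2 : conj (zmodExp n a) * zmodExp n a = 1 := by
    rw [zmodExp, ← Complex.exp_conj, ← Complex.exp_add]
    have : (starRingEnd ℂ) (2 * ↑Real.pi * Complex.I * ((a.val : ℕ) : ℂ) / n)
        = -(2 * ↑Real.pi * Complex.I * ((a.val : ℕ) : ℂ) / n) := by
      simp only [map_div₀, map_mul, Complex.conj_I, Complex.conj_ofReal,
        Complex.conj_natCast, map_ofNat]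
      ring
    rw [this, neg_add_cancel, Complex.exp_zero]
  calc conj (zmodExp n a) = conj (zmodExp n a) * (zmodExp n a * zmodExp n (-a)) := by
        rw [h1, mul_one]
    _ = (conj (zmodExp n a) * zmodExp n a) * zmodExp n (-a) := by ring
    _ = zmodExp n (-a) := by rw [h2, one_mul]

lemma sum_zmodExp (n : ℕ) [NeZero n] (a : ZMod n) (ha : a ≠ 0) :
    ∑ t : ZMod n, zmodExp n (a * t) = 0 := by
  set x := zmodExp n a with hxdef
  have hx : ∀ t : ZMod n, zmodExp n (a * t) = x ^ t.val := by
    intro t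
    rw [hxdef, zmodExp_eq_pow, zmodExp_eq_pow, ← pow_mul, ZMod.val_mul,
      ← pow_eq_pow_mod _ (root_pow n)]
  have hxn : x ^ n = 1 := by
    rw [hxdef, zmodExp_eq_pow, ← pow_mul, mul_comm a.val n, pow_mul, root_pow, one_pow]
  have hx1 : x ≠ 1 := by
    intro h
    rw [hxdef, zmodExp, Complex.exp_eq_one_iff] at h
    obtain ⟨k, hk⟩ := h
    have hn : (n : ℂ) ≠ 0 := Nat.cast_ne_zero.mpr (NeZero.ne n)
    have hpi : (2 * (Real.pi : ℂ) * Complex.I) ≠ 0 := by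
      simp [Real.pi_ne_zero, Complex.I_ne_zero]
    have hval : ((a.val : ℕ) : ℂ) = (k : ℂ) * n := by
      apply mul_left_cancel₀ hpi
      have hk' := (div_eq_iff hn).mp hk
      linear_combination hk'
    have h2 : (a.val : ℤ) = k * n := by exact_mod_cast hval
    have hlt : (a.val : ℤ) < n := by exact_mod_cast a.val_lt
    have hpos : (0 : ℤ) < a.val := by
      have : a.val ≠ 0 := fun h0 => ha ((ZMod.val_eq_zero a).mp h0)
      exact_mod_cast Nat.pos_of_ne_zero this
    have hn0 : (0 : ℤ) < n := by exact_mod_cast Nat.pos_of_ne_zero (NeZero.ne n)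
    have hk0 : 1 ≤ k := by nlinarith
    nlinarith
  have hsum : ∑ t : ZMod n, x ^ t.val = ∑ i ∈ Finset.range n, x ^ i := by
    refine Finset.sum_nbij' (i := fun t : ZMod n => t.val)
      (j := fun i : ℕ => (i : ZMod n)) ?_ ?_ ?_ ?_ ?_
    · intro t _; exact Finset.mem_range.mpr t.val_lt
    · intro i _; exact Finset.mem_univ _
    · intro t _; exact ZMod.natCast_rightInverse t
    · intro i hi; exact ZMod.val_natCast_of_lt (Finset.mem_range.mp hi)
    · intro t _; rfl
  rw [Finset.sum_congr rfl fun t _ => hx t, hsum, geom_sum_eq hx1, hxn,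
    sub_self, zero_div]

/-- If `S ⊆ ℤ/d²ℤ` is a `d`-element Sidon set, then the `d(d−1)` coordinate-wise
quotients `r_{j/k}(t) = e^{2πi(j−k)t/d²}` (`j ≠ k` in `S`) of rows of the `d² × d²`
Fourier matrix, together with the all-ones vector, are pairwise orthogonal in `ℂ^{d²}`. -/
theorem sidon_row_quotients_orthogonal (d : ℕ) [NeZero (d ^ 2)] (hd : 2 ≤ d)
    (S : Finset (ZMod (d ^ 2))) (hcard : S.card = d)
    (hSidon : ∀ a ∈ S, ∀ b ∈ S, ∀ c ∈ S, ∀ e ∈ S,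
      a - b = c - e → a ≠ b → a = c ∧ b = e)
    (r : ZMod (d ^ 2) → ZMod (d ^ 2) → ZMod (d ^ 2) → ℂ)
    (hr : ∀ j k t, r j k t = zmodExp (d ^ 2) ((j - k) * t)) :
    (∀ j ∈ S, ∀ k ∈ S, ∀ s ∈ S, ∀ q ∈ S, j ≠ k → s ≠ q → (j, k) ≠ (s, q) →
        ∑ t : ZMod (d ^ 2), conj (r j k t) * r s q t = 0) ∧
      (∀ j ∈ S, ∀ k ∈ S, j ≠ k → ∑ t : ZMod (d ^ 2), r j k t = 0) := by
  constructor
  · intro j hj k hk s hs q hq hjk hsq hne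
    have hdiff : (s - q) - (j - k) ≠ 0 := by
      intro h
      have heq : j - k = s - q := by linear_combination -h
      obtain ⟨h1, h2⟩ := hSidon j hj k hk s hs q hq heq hjk
      exact hne (by rw [h1, h2])
    calc ∑ t : ZMod (d ^ 2), conj (r j k t) * r s q t
        = ∑ t : ZMod (d ^ 2), zmodExp (d ^ 2) (((s - q) - (j - k)) * t) := by
          refine Finset.sum_congr rfl fun t _ => ?_
          rw [hr, hr, conj_zmodExp, ← zmodExp_add]
          congr 1
          ring
      _ = 0 := sum_zmodExp _ _ hdiff
  · intro j hj k hk hjk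
    have hdiff : j - k ≠ 0 := sub_ne_zero.mpr hjk
    calc ∑ t : ZMod (d ^ 2), r j k t
        = ∑ t : ZMod (d ^ 2), zmodExp (d ^ 2) ((j - k) * t) :=
          Finset.sum_congr rfl fun t _ => hr j k t
      _ = 0 := sum_zmodExp _ _ hdiff
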